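/- Let A be a commutative local ring and f, g_1, …, g_n ∈ A. Assume that f is integral over the ideal I = (g_1, …, g_n), and that there exists an integer N ≥ 0 such that s^N·p ∈ ker^{(1)}φ for every p ∈ ker φ (property (GCL)). Then f belongs to the ideal (g_1, …, g_n). In particular, a divisor satisfying property (GCL) is Euler homogeneous. -/

import Mathlib

open MvPolynomial

/-- The `A`-algebra map `φ : A[s, ξ_1, …, ξ_n] → A[t]` with `φ(s) = f·t` and
`φ(ξ_j) = g_j·t`; variable `0` is `s` and variable `j.succ` is `ξ_j`. Its image is the
Rees algebra of the ideal `(f, g_1, …, g_n)`. -/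
noncomputable def reesPhi {A : Type*} [CommRing A] {n : ℕ} (f : A) (g : Fin n → A) :
    MvPolynomial (Fin (n + 1)) A →ₐ[A] Polynomial A :=
  aeval (Fin.cons (Polynomial.C f * Polynomial.X) fun j => Polynomial.C (g j) * Polynomial.X)

/-- `ker^{(1)} φ`: the ideal of `A[s, ξ_1, …, ξ_n]` generated by the homogeneous
elements of degree `1` lying in `ker φ`. -/
noncomputable def kerOne {A : Type*} [CommRing A] {n : ℕ} (f : A) (g : Fin n → A) :
    Ideal (MvPolynomial (Fin (n + 1)) A) :=
  Ideal.span {p | p ∈ RingHom.ker (reesPhi f g) ∧ p.IsHomogeneous 1}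

/-! Write `I = (g_1, …, g_n)`. Lifting the coefficients `c_i ∈ I^{d-i}` of an equation of
integral dependence to forms `C_i(ξ)` of degree `d - i` turns it into the form
`p = s^d + ∑ C_i(ξ) s^i` of degree `d` in `ker φ`; by (GCL) also `s^N p ∈ ker^{(1)} φ`.
Evaluation at `s = 1, ξ = 0` sends `s^N p` to `1`. On the other hand, for a linear form
`L ∈ ker φ` homogeneity gives `0 = L(f, g) ≡ f · L(1, 0) mod I`, so this evaluation maps
`ker^{(1)} φ` into `I : f`. Hence `1 ∈ I : f`, i.e. `f ∈ I`. -/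

theorem MvPolynomial.IsHomogeneous.aeval_smul {σ R S : Type*} [CommSemiring R] [CommSemiring S]
    [Algebra R S] {k : ℕ} {p : MvPolynomial σ R} (hp : p.IsHomogeneous k) (r : S) (x : σ → S) :
    MvPolynomial.aeval (r • x) p = r ^ k * MvPolynomial.aeval x p := by
  rw [aeval_def, aeval_def, eval₂_eq, eval₂_eq, Finset.mul_sum]
  refine Finset.sum_congr rfl fun d hd => ?_
  simp only [Pi.smul_apply, smul_eq_mul, mul_pow, Finset.prod_mul_distrib,
    Finset.prod_pow_eq_pow_sum, hp.degree_eq_sum_deg_support hd]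
  ring

theorem MvPolynomial.IsHomogeneous.aeval_zero {σ R S : Type*} [CommSemiring R] [CommSemiring S]
    [Algebra R S] {k : ℕ} {p : MvPolynomial σ R} (hp : p.IsHomogeneous k) (hk : k ≠ 0) :
    MvPolynomial.aeval (0 : σ → S) p = 0 := by
  rw [← zero_smul S (0 : σ → S), hp.aeval_smul, zero_pow hk, zero_mul]

section Rees

variable {A : Type*} [CommRing A] {n : ℕ} (f : A) (g : Fin n → A)

theorem reesPhi_apply_of_isHomogeneous {k : ℕ} {p : MvPolynomial (Fin (n + 1)) A}
    (hp : p.IsHomogeneous k) :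
    reesPhi f g p = Polynomial.C (aeval (Fin.cons f g) p) * Polynomial.X ^ k := by
  have hpoints : (Fin.cons (Polynomial.C f * Polynomial.X)
      (fun j => Polynomial.C (g j) * Polynomial.X) : Fin (n + 1) → Polynomial A) =
      (Polynomial.X : Polynomial A) • (Polynomial.C ∘ (Fin.cons f g : Fin (n + 1) → A)) := by
    ext1 i
    cases i using Fin.cases <;> simp [Polynomial.X_mul]
  rw [reesPhi, hpoints, hp.aeval_smul, ← Polynomial.algebraMap_eq, aeval_algebraMap_apply,
    mul_comm]

theorem mem_ker_reesPhi_iff {k : ℕ} {p : MvPolynomial (Fin (n + 1)) A}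
    (hp : p.IsHomogeneous k) :
    p ∈ RingHom.ker (reesPhi f g) ↔ aeval (Fin.cons f g) p = 0 := by
  rw [RingHom.mem_ker, reesPhi_apply_of_isHomogeneous f g hp, Polynomial.C_mul_X_pow_eq_monomial,
    Polynomial.monomial_eq_zero_iff]

theorem aeval_cons_eq_pow_mul_mod_span {k : ℕ} {p : MvPolynomial (Fin (n + 1)) A}
    (hp : p.IsHomogeneous k) :
    Ideal.Quotient.mk (Ideal.span (Set.range g)) (aeval (Fin.cons f g) p) =
      Ideal.Quotient.mk (Ideal.span (Set.range g)) (f ^ k * aeval (Fin.cons 1 0) p) := by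
  set q := Ideal.Quotient.mkₐ A (Ideal.span (Set.range g))
  have hpoints : (fun i => q ((Fin.cons f g : Fin (n + 1) → A) i)) =
      q f • fun i => q ((Fin.cons 1 0 : Fin (n + 1) → A) i) := by
    ext1 i
    cases i using Fin.cases
    · simp
    · simp [q]
  have h := comp_aeval_apply (Fin.cons f g) q p
  rw [hpoints, hp.aeval_smul, ← comp_aeval_apply] at h
  simpa [q] using h

theorem kerOne_le_comap_colon :
    kerOne f g ≤ ((Ideal.span (Set.range g)).colon {f}).comap (aeval (Fin.cons 1 0)) := by
  rw [kerOne, Ideal.span_le]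
  rintro L ⟨hker, hhom⟩
  have h := aeval_cons_eq_pow_mul_mod_span f g hhom
  rw [(mem_ker_reesPhi_iff f g hhom).mp hker, pow_one, map_zero, eq_comm,
    Ideal.Quotient.eq_zero_iff_mem] at h
  rwa [SetLike.mem_coe, Ideal.mem_comap, Submodule.mem_colon_singleton, smul_eq_mul, mul_comm]

theorem exists_mem_ker_reesPhi_aeval_cons_one_zero_eq_one {d : ℕ} {c : ℕ → A}
    (hc : ∀ i < d, c i ∈ Ideal.span (Set.range g) ^ (d - i))
    (hf : f ^ d + ∑ i ∈ Finset.range d, c i * f ^ i = 0) :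
    ∃ p ∈ RingHom.ker (reesPhi f g), aeval (Fin.cons (1 : A) 0) p = 1 := by
  choose! C hChom hCeval using fun i hi =>
    (Ideal.mem_span_pow_iff_exists_isHomogeneous g (c i)).mp (hc i hi)
  set p : MvPolynomial (Fin (n + 1)) A :=
    X 0 ^ d + ∑ i ∈ Finset.range d, rename Fin.succ (C i) * X 0 ^ i
  have hp : p.IsHomogeneous d := by
    refine (isHomogeneous_X_pow 0 d).add (IsHomogeneous.sum _ _ _ fun i hi => ?_)
    have hi := Finset.mem_range.mp hi
    simpa [Nat.sub_add_cancel hi.le] using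
      (hChom i hi).rename_isHomogeneous.mul (isHomogeneous_X_pow (0 : Fin (n + 1)) i)
  refine ⟨p, (mem_ker_reesPhi_iff f g hp).mpr ?_, ?_⟩
  · simp only [p, map_add, map_pow, map_sum, map_mul, aeval_X, Fin.cons_zero, aeval_rename,
      Fin.cons_comp_succ, aeval_eq_eval]
    rw [← hf, Finset.sum_congr rfl fun i hi => by rw [hCeval i (Finset.mem_range.mp hi)]]
  · simp only [p, map_add, map_pow, map_sum, map_mul, aeval_X, Fin.cons_zero, aeval_rename,
      Fin.cons_comp_succ, one_pow, mul_one]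
    rw [Finset.sum_eq_zero fun i hi => (hChom i (Finset.mem_range.mp hi)).aeval_zero
      (Nat.sub_ne_zero_of_lt (Finset.mem_range.mp hi)), add_zero]

end Rees

theorem mem_of_GCL_general {A : Type*} [CommRing A] {n : ℕ}
    (f : A) (g : Fin n → A)
    (hint : ∃ d : ℕ, 0 < d ∧ ∃ c : ℕ → A,
      (∀ i < d, c i ∈ (Ideal.span (Set.range g)) ^ (d - i)) ∧
      f ^ d + ∑ i ∈ Finset.range d, c i * f ^ i = 0)
    (hGCL : ∃ N : ℕ, ∀ p ∈ RingHom.ker (reesPhi f g),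
      (X 0 : MvPolynomial (Fin (n + 1)) A) ^ N * p ∈ kerOne f g) :
    f ∈ Ideal.span (Set.range g) := by
  obtain ⟨d, -, c, hc, hf⟩ := hint
  obtain ⟨N, hN⟩ := hGCL
  obtain ⟨p, hp, hp1⟩ := exists_mem_ker_reesPhi_aeval_cons_one_zero_eq_one f g hc hf
  have h := kerOne_le_comap_colon f g (hN p hp)
  rwa [Ideal.mem_comap, map_mul, map_pow, aeval_X, Fin.cons_zero, one_pow, one_mul, hp1,
    Submodule.mem_colon_singleton, one_smul] at h

/-- Let `A` be a commutative local ring and `f, g_1, …, g_n ∈ A` with `f`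
integral over the ideal `I = (g_1, …, g_n)`. If property (GCL) holds, i.e. there exists
`N ≥ 0` with `s^N · ker φ ⊆ ker^{(1)} φ`, then `f ∈ (g_1, …, g_n)`. -/
theorem mem_of_GCL {A : Type*} [CommRing A] [IsLocalRing A] {n : ℕ}
    (f : A) (g : Fin n → A)
    (hint : ∃ d : ℕ, 0 < d ∧ ∃ c : ℕ → A,
      (∀ i < d, c i ∈ (Ideal.span (Set.range g)) ^ (d - i)) ∧
      f ^ d + ∑ i ∈ Finset.range d, c i * f ^ i = 0)
    (hGCL : ∃ N : ℕ, ∀ p ∈ RingHom.ker (reesPhi f g),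
      (X 0 : MvPolynomial (Fin (n + 1)) A) ^ N * p ∈ kerOne f g) :
    f ∈ Ideal.span (Set.range g) :=
  mem_of_GCL_general f g hint hGCL
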